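/- arXiv:1805.04966 — 5 statements merged into one kernel-verified Lean document; each statement's English description precedes it below -/
import Mathlib

section
/- Every connected graph G of order n ≥ 2 is 𝔡(G)-partition dimensional; that is, 𝔡(G) is the largest integer k such that G admits a k-partition generator. -/
open SimpleGraph Finset

/-- Distance from a vertex to a finite set of vertices:
`min_{w ∈ S} d(u, w)`. -/
noncomputable def setDist {V : Type*} (G : SimpleGraph V) (u : V) (S : Finset V) : ℕ :=
  sInf (G.dist u '' (S : Set V))

/-- The set `𝒟_G(x,y)` of vertices distinguishing `x` and `y`. -/
noncomputable def DG {V : Type*} (G : SimpleGraph V) [Fintype V] (x y : V) : Finset V :=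
  Finset.univ.filter fun z => G.dist z x ≠ G.dist z y

/-- `𝔡(G) = min_{x ≠ y} |𝒟_G(x,y)|`. -/
noncomputable def frakd {V : Type*} (G : SimpleGraph V) [Fintype V] : ℕ :=
  sInf {m | ∃ x y : V, x ≠ y ∧ (DG G x y).card = m}

/-- `𝔡*(G) = max_{x ≠ y} |𝒟_G(x,y)|`. -/
noncomputable def frakdStar {V : Type*} (G : SimpleGraph V) [Fintype V] : ℕ :=
  sSup {m | ∃ x y : V, x ≠ y ∧ (DG G x y).card = m}

/-- A partition of the vertex set is a `k`-partition generator if every pair of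
distinct vertices is distinguished by at least `k` parts. -/
noncomputable def IsKPartitionGenerator {V : Type*} (G : SimpleGraph V) [Fintype V]
    [DecidableEq V] (k : ℕ) (P : Finpartition (Finset.univ : Finset V)) : Prop :=
  ∀ u v : V, u ≠ v → k ≤ (P.parts.filter fun S => setDist G u S ≠ setDist G v S).card

/-- The `k`-partition dimension `pd_k(G)`. -/
noncomputable def pd {V : Type*} (G : SimpleGraph V) [Fintype V] [DecidableEq V] (k : ℕ) : ℕ :=
  sInf {m | ∃ P : Finpartition (Finset.univ : Finset V),
    IsKPartitionGenerator G k P ∧ P.parts.card = m}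

/-- A set of vertices is a `k`-metric generator if every pair of distinct
vertices is distinguished by at least `k` of its vertices. -/
def IsKMetricGenerator {V : Type*} (G : SimpleGraph V) [Fintype V] (k : ℕ) (W : Finset V) : Prop :=
  ∀ u v : V, u ≠ v → k ≤ (W.filter fun z => G.dist z u ≠ G.dist z v).card

/-- The `k`-metric dimension `dim_k(G)`. -/
noncomputable def metricDim {V : Type*} (G : SimpleGraph V) [Fintype V] (k : ℕ) : ℕ :=
  sInf {m | ∃ W : Finset V, IsKMetricGenerator G k W ∧ W.card = m}

section DistinguishingSets

variable {V : Type*} (G : SimpleGraph V)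

theorem setDist_singleton (u z : V) : setDist G u {z} = G.dist u z := by
  simp [setDist]

theorem setDist_congr {x y : V} {S : Finset V} (h : ∀ z ∈ S, G.dist z x = G.dist z y) :
    setDist G x S = setDist G y S := by
  unfold setDist
  congr 1
  refine Set.image_congr fun z hz => ?_
  rw [dist_comm, h z hz, dist_comm]

variable [Fintype V]

theorem mem_DG_iff {x y z : V} : z ∈ DG G x y ↔ G.dist z x ≠ G.dist z y := by
  simp [DG]

theorem exists_mem_DG_of_setDist_ne {x y : V} {S : Finset V}
    (h : setDist G x S ≠ setDist G y S) : ∃ z ∈ S, z ∈ DG G x y := by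
  by_contra! hS
  exact h (setDist_congr G fun z hz => by simpa [mem_DG_iff] using hS z hz)

theorem frakd_le_card_DG {x y : V} (hxy : x ≠ y) : frakd G ≤ #(DG G x y) :=
  Nat.sInf_le ⟨x, y, hxy, rfl⟩

theorem exists_card_DG_eq_frakd (hn : 2 ≤ Fintype.card V) :
    ∃ x y : V, x ≠ y ∧ #(DG G x y) = frakd G := by
  obtain ⟨x, y, hxy⟩ := Fintype.exists_pair_of_one_lt_card hn
  exact Nat.sInf_mem (s := {m | ∃ x y : V, x ≠ y ∧ #(DG G x y) = m}) ⟨_, x, y, hxy, rfl⟩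

variable [DecidableEq V]

/-- The parts distinguishing `x` and `y` are disjoint and each meets `DG G x y`. -/
theorem card_parts_setDist_ne_le_card_DG (P : Finpartition (univ : Finset V)) (x y : V) :
    #(P.parts.filter fun S => setDist G x S ≠ setDist G y S) ≤ #(DG G x y) := by
  refine card_le_card_of_forall_subsingleton (fun S z => z ∈ S) (fun S hS => ?_) fun z _ => ?_
  · obtain ⟨z, hzS, hz⟩ := exists_mem_DG_of_setDist_ne G (mem_filter.1 hS).2
    exact ⟨z, hz, hzS⟩
  · rintro S ⟨hS, hzS⟩ T ⟨hT, hzT⟩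
    exact P.disjoint.elim_finset (mem_filter.1 hS).1 (mem_filter.1 hT).1 z hzS hzT

theorem card_parts_bot_setDist_ne (x y : V) :
    #((⊥ : Finpartition (univ : Finset V)).parts.filter
      fun S => setDist G x S ≠ setDist G y S) = #(DG G x y) := by
  rw [Finpartition.parts_bot, filter_map, card_map]
  congr 1
  ext z
  simp [setDist_singleton, mem_DG_iff, dist_comm]

end DistinguishingSets

theorem stmt_1_general {V : Type*} [Fintype V] [DecidableEq V] (G : SimpleGraph V)
    (hn : 2 ≤ Fintype.card V) :
    (∃ P : Finpartition (Finset.univ : Finset V), IsKPartitionGenerator G (frakd G) P) ∧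
    (∀ k : ℕ, (∃ P : Finpartition (Finset.univ : Finset V), IsKPartitionGenerator G k P) →
      k ≤ frakd G) := by
  refine ⟨⟨⊥, fun u v huv => ?_⟩, ?_⟩
  · rw [card_parts_bot_setDist_ne]
    exact frakd_le_card_DG G huv
  · rintro k ⟨P, hP⟩
    obtain ⟨x, y, hxy, hcard⟩ := exists_card_DG_eq_frakd G hn
    exact hcard ▸ (hP x y hxy).trans (card_parts_setDist_ne_le_card_DG G P x y)

theorem stmt_1 {V : Type*} [Fintype V] [DecidableEq V] (G : SimpleGraph V)
    (hG : G.Connected) (hn : 2 ≤ Fintype.card V) :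
    (∃ P : Finpartition (Finset.univ : Finset V), IsKPartitionGenerator G (frakd G) P) ∧
    (∀ k : ℕ, (∃ P : Finpartition (Finset.univ : Finset V), IsKPartitionGenerator G k P) →
      k ≤ frakd G) :=
  stmt_1_general G hn
end

section
/- A connected graph G of order n ≥ 2 satisfies 𝔡(G) = 2 if and only if G has two distinct vertices belonging to the same twin equivalence class (i.e., two distinct vertices x,y with N(x) = N(y) or N[x] = N[y]). -/
open SimpleGraph Finset

private lemma twin_dist_le {V : Type*} (G : SimpleGraph V) (hG : G.Connected)
    {x y z : V} (hx : z ≠ x) (hy : z ≠ y)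
    (htw : ∀ w, w ≠ x → w ≠ y → (G.Adj x w ↔ G.Adj y w)) :
    G.dist z y ≤ G.dist z x := by
  obtain ⟨p, hp⟩ := (hG.preconnected x z).exists_walk_length_eq_dist
  cases p with
  | nil => exact absurd rfl hx
  | @cons _ w _ h q =>
    rw [SimpleGraph.Walk.length_cons] at hp
    by_cases hwy : w = y
    · calc G.dist z y = G.dist y z := SimpleGraph.dist_comm
        _ ≤ q.length := hwy ▸ SimpleGraph.dist_le q
        _ ≤ q.length + 1 := Nat.le_succ _
        _ = G.dist x z := hp
        _ = G.dist z x := SimpleGraph.dist_comm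
    · have hwx : w ≠ x := fun h' => G.irrefl (h' ▸ h)
      have hyw : G.Adj y w := (htw w hwx hwy).mp h
      calc G.dist z y = G.dist y z := SimpleGraph.dist_comm
        _ ≤ (SimpleGraph.Walk.cons hyw q).length := SimpleGraph.dist_le _
        _ = q.length + 1 := SimpleGraph.Walk.length_cons _ _
        _ = G.dist x z := hp
        _ = G.dist z x := SimpleGraph.dist_comm

theorem stmt_5 {V : Type*} [Fintype V] [DecidableEq V] (G : SimpleGraph V)
    (hG : G.Connected) (hn : 2 ≤ Fintype.card V) :
    frakd G = 2 ↔ ∃ x y : V, x ≠ y ∧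
      (G.neighborSet x = G.neighborSet y ∨
        insert x (G.neighborSet x) = insert y (G.neighborSet y)) := by
  have hsub : ∀ x y : V, x ≠ y → ({x, y} : Finset V) ⊆ DG G x y := by
    intro x y hxy z hz
    simp only [mem_insert, mem_singleton] at hz
    simp only [DG, mem_filter, mem_univ, true_and]
    rcases hz with rfl | rfl
    · rw [SimpleGraph.dist_self]
      exact fun h => (hG.pos_dist_of_ne hxy).ne' (SimpleGraph.dist_comm ▸ h.symm)
    · rw [SimpleGraph.dist_self]
      exact fun h => (hG.pos_dist_of_ne hxy.symm).ne' h
  have hge : ∀ m ∈ {m | ∃ x y : V, x ≠ y ∧ (DG G x y).card = m}, 2 ≤ m := by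
    rintro m ⟨x, y, hxy, rfl⟩
    calc 2 = ({x, y} : Finset V).card := (Finset.card_pair hxy).symm
      _ ≤ _ := Finset.card_le_card (hsub x y hxy)
  constructor
  · intro h
    obtain ⟨x, y, hxy⟩ := Fintype.exists_pair_of_one_lt_card hn
    have hne : {m | ∃ x y : V, x ≠ y ∧ (DG G x y).card = m}.Nonempty :=
      ⟨_, x, y, hxy, rfl⟩
    have hmem := Nat.sInf_mem hne
    rw [show sInf _ = frakd G from rfl, h] at hmem
    obtain ⟨a, b, hab, hcard⟩ := hmem
    have heq : DG G a b = {a, b} :=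
      (Finset.eq_of_subset_of_card_le (hsub a b hab)
        (by rw [hcard, Finset.card_pair hab])).symm
    have hdist : ∀ z, z ≠ a → z ≠ b → G.dist z a = G.dist z b := by
      intro z hza hzb
      by_contra hc
      have : z ∈ DG G a b := by simp [DG, hc]
      rw [heq] at this
      simp only [mem_insert, mem_singleton] at this
      tauto
    have hadj : ∀ w, w ≠ a → w ≠ b → (G.Adj a w ↔ G.Adj b w) := by
      intro w hwa hwb
      rw [← SimpleGraph.dist_eq_one_iff_adj, ← SimpleGraph.dist_eq_one_iff_adj,
        SimpleGraph.dist_comm (u := a) (v := w), SimpleGraph.dist_comm (u := b) (v := w), hdist w hwa hwb]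
    refine ⟨a, b, hab, ?_⟩
    by_cases hab' : G.Adj a b
    · right
      ext w
      simp only [Set.mem_insert_iff, SimpleGraph.mem_neighborSet]
      by_cases hwa : w = a
      · subst hwa; simp [hab'.symm]
      by_cases hwb : w = b
      · subst hwb; simp [hab']
      · simp only [hwa, hwb, false_or]
        exact hadj w hwa hwb
    · left
      ext w
      simp only [SimpleGraph.mem_neighborSet]
      by_cases hwa : w = a
      · subst hwa
        exact ⟨fun h => (G.irrefl h).elim, fun h => (hab' h.symm).elim⟩
      by_cases hwb : w = b
      · subst hwb
        exact ⟨fun h => (hab' h).elim, fun h => (G.irrefl h).elim⟩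
      · exact hadj w hwa hwb
  · rintro ⟨x, y, hxy, htwin⟩
    have hadj : ∀ w, w ≠ x → w ≠ y → (G.Adj x w ↔ G.Adj y w) := by
      intro w hwx hwy
      rcases htwin with h | h
      · rw [← SimpleGraph.mem_neighborSet, ← SimpleGraph.mem_neighborSet, h]
      · have := Set.ext_iff.mp h w
        simpa [Set.mem_insert_iff, hwx, hwy] using this
    have hDG : DG G x y = {x, y} := by
      apply Finset.Subset.antisymm _ (hsub x y hxy)
      intro z hz
      simp only [DG, mem_filter, mem_univ, true_and] at hz
      simp only [mem_insert, mem_singleton]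
      by_contra hc
      push_neg at hc
      exact hz (le_antisymm
        (twin_dist_le G hG hc.2 hc.1 (fun w hwy hwx => (hadj w hwx hwy).symm))
        (twin_dist_le G hG hc.1 hc.2 hadj))
    have h2 : (2 : ℕ) ∈ {m | ∃ x y : V, x ≠ y ∧ (DG G x y).card = m} :=
      ⟨x, y, hxy, by rw [hDG, Finset.card_pair hxy]⟩
    exact le_antisymm (Nat.sInf_le h2) (hge _ (Nat.sInf_mem ⟨2, h2⟩))
end

section
/- If C_n is an even cycle of order n, then 𝔡(C_n) = n − 2. -/
/-!
In `C_n`, `d(u, v) = min (v - u) (n - (v - u))` with the difference read in `ℤ/n`, and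
`𝒟(x, y)` is the complement of the set of vertices equidistant from `x` and `y`. For `n` even,
writing `z = x - t`, the equation `d(z, x) = d(z, y)` forces `2t ≡ x - y (mod n)`, so at most two
vertices are equidistant; for `y = x + 2` both `x + 1` and its antipode are.
-/

open SimpleGraph Finset

open Fin.NatCast

theorem Fin.val_sub_eq_ite {n : ℕ} (a b : Fin n) :
    (a - b).val = if b.val ≤ a.val then a.val - b.val else n + a.val - b.val := by
  split_ifs with h
  · exact Fin.sub_val_of_le h
  · exact Fin.coe_sub_iff_lt.2 (not_le.1 h)

namespace SimpleGraph

theorem card_DG_add_card_equidistant {V : Type*} (G : SimpleGraph V) [Fintype V] (x y : V) :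
    #(DG G x y) + #{z | G.dist z x = G.dist z y} = Fintype.card V := by
  rw [DG, add_comm]
  exact card_filter_add_card_filter_not _

variable {n : ℕ}

theorem cycleGraph_dist_add_natCast_le (u : Fin (n + 2)) (k : ℕ) :
    (cycleGraph (n + 2)).dist u (u + k) ≤ k := by
  induction k with
  | zero => simp
  | succ k ih =>
    have hadj : (cycleGraph (n + 2)).Adj (u + k) (u + k + 1) := by simp [cycleGraph_adj]
    calc (cycleGraph (n + 2)).dist u (u + (k + 1 : ℕ))
        ≤ (cycleGraph (n + 2)).dist u (u + k) + (cycleGraph (n + 2)).dist (u + k) (u + k + 1) := by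
          rw [Nat.cast_succ, ← add_assoc]; exact cycleGraph_connected.dist_triangle
      _ ≤ k + 1 := by rw [dist_eq_one_iff_adj.2 hadj]; omega

theorem cycleGraph_min_val_sub_le_length {u v : Fin (n + 2)} (p : (cycleGraph (n + 2)).Walk u v) :
    min (v - u).val (n + 2 - (v - u).val) ≤ p.length := by
  induction p with
  | nil => simp
  | @cons u w v hadj p ih =>
    have hstep : (w - u).val = 1 ∨ (w - u).val = n + 1 := by
      rw [cycleGraph_adj, ← neg_sub, neg_eq_iff_eq_neg] at hadj
      rcases hadj with h | h <;> simp [h]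
    have hvu : (v - u).val = ((v - w) + (w - u)).val := by rw [sub_add_sub_cancel]
    have := (v - w).isLt
    rw [Walk.length_cons, hvu, Fin.val_add_eq_ite]
    split <;> omega

theorem cycleGraph_dist (u v : Fin (n + 2)) :
    (cycleGraph (n + 2)).dist u v = min (v - u).val (n + 2 - (v - u).val) := by
  refine le_antisymm (le_min ?_ ?_) ?_
  · simpa using cycleGraph_dist_add_natCast_le u (v - u).val
  · have h := cycleGraph_dist_add_natCast_le v (u - v).val
    rw [Fin.cast_val_eq_self, add_sub_cancel, dist_comm] at h
    refine h.trans ?_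
    rw [Fin.val_sub_eq_ite, Fin.val_sub_eq_ite]
    split_ifs <;> omega
  · obtain ⟨p, hp⟩ := cycleGraph_connected.preconnected u v |>.exists_walk_length_eq_dist
    exact hp ▸ cycleGraph_min_val_sub_le_length p

theorem card_equidistant_cycleGraph_le_two (he : Even (n + 2)) {x y : Fin (n + 2)} (hxy : x ≠ y) :
    #{z | (cycleGraph (n + 2)).dist z x = (cycleGraph (n + 2)).dist z y} ≤ 2 := by
  set a := (n + 2 - (y - x).val) / 2
  calc #{z | (cycleGraph (n + 2)).dist z x = (cycleGraph (n + 2)).dist z y}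
      ≤ #{a, a + (n + 2) / 2} := by
        refine card_le_card_of_injOn (fun z => (x - z).val) ?_ ?_
        · intro z hz
          replace hz := (mem_filter.1 (mem_coe.1 hz)).2
          have hyz : (y - z).val = ((y - x) + (x - z)).val := by rw [sub_add_sub_cancel]
          have hyx : (y - x).val ≠ 0 := Fin.val_ne_zero_iff.2 (sub_ne_zero.2 hxy.symm)
          have := (y - x).isLt
          have := (x - z).isLt
          rw [cycleGraph_dist, cycleGraph_dist, hyz, Fin.val_add_eq_ite] at hz
          simp only [coe_insert, coe_singleton, Set.mem_insert_iff, Set.mem_singleton_iff]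
          obtain ⟨m, hm⟩ := he
          split at hz <;> omega
        · exact fun z₁ _ z₂ _ h => sub_right_inj.1 (Fin.ext h)
    _ ≤ 2 := card_le_two

theorem two_le_card_equidistant_cycleGraph (hn : 2 ≤ n) (he : Even (n + 2)) :
    2 ≤ #{z : Fin (n + 2) | (cycleGraph (n + 2)).dist z 0 =
      (cycleGraph (n + 2)).dist z ⟨2, by omega⟩} := by
  obtain ⟨m, hm⟩ := he
  calc 2 = #({⟨1, by omega⟩, ⟨m + 1, by omega⟩} : Finset (Fin (n + 2))) :=
        (card_pair (by simp [Fin.ext_iff]; omega)).symm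
    _ ≤ _ := by
      refine card_le_card fun z hz => ?_
      simp only [mem_insert, mem_singleton] at hz
      rcases hz with rfl | rfl <;>
      · rw [mem_filter, cycleGraph_dist, cycleGraph_dist, Fin.val_sub_eq_ite, Fin.val_sub_eq_ite]
        refine ⟨mem_univ _, ?_⟩
        split_ifs <;> simp only [Fin.val_zero] at * <;> omega

end SimpleGraph

theorem stmt_8 (n : ℕ) (hn : 4 ≤ n) (he : Even n) :
    frakd (SimpleGraph.cycleGraph n) = n - 2 := by
  obtain ⟨n, rfl⟩ : ∃ m, n = m + 2 := ⟨n - 2, by omega⟩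
  have hcard (x y : Fin (n + 2)) := card_DG_add_card_equidistant (cycleGraph (n + 2)) x y
  simp only [Fintype.card_fin] at hcard
  have h02 : (0 : Fin (n + 2)) ≠ ⟨2, by omega⟩ := by simp [Fin.ext_iff]
  refine IsLeast.csInf_eq ⟨⟨0, ⟨2, by omega⟩, h02, ?_⟩, ?_⟩
  · have := hcard 0 ⟨2, by omega⟩
    have := card_equidistant_cycleGraph_le_two he h02
    have := two_le_card_equidistant_cycleGraph (by omega) he
    omega
  · rintro _ ⟨x, y, hxy, rfl⟩
    have := hcard x y
    have := card_equidistant_cycleGraph_le_two he hxy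
    omega
end

section
/- If G is a connected graph of order n that is not a complete graph, then 𝔡(G) ≤ n − ω(G) + 1, where ω(G) is the clique number of G. -/
open SimpleGraph Finset

-- auxiliary: key bound
lemma frakd_le_of_pair {V : Type*} [Fintype V] [DecidableEq V] (G : SimpleGraph V)
    {x y : V} (hxy : x ≠ y) {S : Finset V}
    (hS : ∀ z ∈ S, G.dist z x = G.dist z y) :
    frakd G ≤ Fintype.card V - S.card := by
  have h1 : frakd G ≤ (DG G x y).card := Nat.sInf_le ⟨x, y, hxy, rfl⟩
  refine h1.trans ?_
  have hsub : DG G x y ⊆ Finset.univ \ S := by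
    intro z hz
    simp only [DG, Finset.mem_filter, Finset.mem_univ, true_and] at hz
    simp only [Finset.mem_sdiff, Finset.mem_univ, true_and]
    intro hzS
    exact hz (hS z hzS)
  calc (DG G x y).card ≤ (Finset.univ \ S).card := Finset.card_le_card hsub
    _ = Fintype.card V - S.card := by
        rw [Finset.card_sdiff_of_subset (Finset.subset_univ S), Finset.card_univ]

-- auxiliary: a vertex with two distinct neighbors
lemma exists_cherry {V : Type*} (G : SimpleGraph V) (hG : G.Connected) (hnc : G ≠ ⊤) :
    ∃ x u v : V, u ≠ v ∧ G.Adj x u ∧ G.Adj x v := by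
  have : ∃ a b : V, a ≠ b ∧ ¬ G.Adj a b := by
    by_contra h
    push_neg at h
    apply hnc
    ext a b
    simp only [top_adj]
    exact ⟨Adj.ne, h a b⟩
  obtain ⟨a, b, hab, hnadj⟩ := this
  have hd0 : G.dist a b ≠ 0 := by
    rw [SimpleGraph.dist_ne_zero_iff_ne_and_reachable]
    exact ⟨hab, hG.preconnected a b⟩
  have hd1 : G.dist a b ≠ 1 := fun h => hnadj (SimpleGraph.dist_eq_one_iff_adj.mp h)
  obtain ⟨p, hp, hlen⟩ := hG.exists_path_of_dist a b
  match p, hp, hlen with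
  | SimpleGraph.Walk.nil, _, hlen => exact absurd hlen.symm (by simpa using hd0)
  | SimpleGraph.Walk.cons h SimpleGraph.Walk.nil, _, hlen =>
      exact absurd hlen.symm (by simpa using hd1)
  | SimpleGraph.Walk.cons (v := x) h (SimpleGraph.Walk.cons (v := v) h2 r), hp, _ =>
      refine ⟨x, a, v, ?_, h.symm, h2⟩
      intro hav
      subst hav
      have := hp.support_nodup
      simp at this

theorem stmt_10 {V : Type*} [Fintype V] [DecidableEq V] (G : SimpleGraph V)
    (hG : G.Connected) (hnc : G ≠ ⊤) :
    frakd G ≤ Fintype.card V - G.cliqueNum + 1 := by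
  set n := Fintype.card V with hn
  set ω := G.cliqueNum with hω
  by_cases h3 : 3 ≤ ω
  · -- big clique case
    obtain ⟨W, hWc, hWcard⟩ := G.exists_isNClique_cliqueNum
    -- a vertex outside W
    have hWne : W ≠ Finset.univ := by
      intro hWu
      apply hnc
      ext a b
      simp only [top_adj]
      refine ⟨Adj.ne, fun hab => hWc ?_ ?_ hab⟩ <;> simp [hWu]
    obtain ⟨w, hw⟩ : ∃ w, w ∉ W := by
      by_contra h
      push_neg at h
      exact hWne (Finset.eq_univ_iff_forall.mpr h)
    -- min distance from w to W
    have hWnon : W.Nonempty := Finset.card_pos.mp (by omega)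
    obtain ⟨u0, hu0, hmin⟩ := W.exists_min_image (fun u => G.dist w u) hWnon
    set t := G.dist w u0 with ht
    have hmaps : ∀ u ∈ W, G.dist w u ∈ Finset.Icc t (t + 1) := by
      intro u hu
      rw [Finset.mem_Icc]
      refine ⟨hmin u hu, ?_⟩
      rcases eq_or_ne u u0 with rfl | hne
      · omega
      · have hadj : G.Adj u0 u := hWc hu0 hu (Ne.symm hne)
        have := hG.dist_triangle (u := w) (v := u0) (w := u)
        rw [SimpleGraph.dist_eq_one_iff_adj.mpr hadj] at this
        omega
    obtain ⟨u, hu, v, hv, huv, heq⟩ :=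
      Finset.exists_ne_map_eq_of_card_lt_of_maps_to
        (t := Finset.Icc t (t+1)) (by rw [Nat.card_Icc]; omega) hmaps
    -- the set of non-distinguishers
    set S : Finset V := insert w (W \ {u, v}) with hS
    have hsub : ({u, v} : Finset V) ⊆ W := by
      intro z hz
      simp only [Finset.mem_insert, Finset.mem_singleton] at hz
      rcases hz with rfl | rfl <;> assumption
    have hcard2 : ({u, v} : Finset V).card = 2 := by
      rw [Finset.card_insert_of_notMem (by simpa using huv), Finset.card_singleton]
    have hScard : S.card = ω - 1 := by
      rw [hS, Finset.card_insert_of_notMem (fun h => hw (Finset.mem_sdiff.mp h).1),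
        Finset.card_sdiff_of_subset hsub, hcard2, hWcard]
      omega
    have hSnd : ∀ z ∈ S, G.dist z u = G.dist z v := by
      intro z hz
      rw [hS, Finset.mem_insert] at hz
      rcases hz with rfl | hz
      · exact heq
      · obtain ⟨hzW, hz2⟩ := Finset.mem_sdiff.mp hz
        simp only [Finset.mem_insert, Finset.mem_singleton, not_or] at hz2
        rw [SimpleGraph.dist_eq_one_iff_adj.mpr (hWc hzW hu hz2.1),
          SimpleGraph.dist_eq_one_iff_adj.mpr (hWc hzW hv hz2.2)]
    have := frakd_le_of_pair G huv hSnd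
    have hωn : ω ≤ n := by
      show G.cliqueNum ≤ Fintype.card V
      rw [← hWcard]; exact Finset.card_le_univ W
    omega
  · -- small clique case
    obtain ⟨x, u, v, huv, hxu, hxv⟩ := exists_cherry G hG hnc
    have hSnd : ∀ z ∈ ({x} : Finset V), G.dist z u = G.dist z v := by
      intro z hz
      rw [Finset.mem_singleton] at hz
      subst hz
      rw [SimpleGraph.dist_eq_one_iff_adj.mpr hxu, SimpleGraph.dist_eq_one_iff_adj.mpr hxv]
    have := frakd_le_of_pair G huv hSnd
    rw [Finset.card_singleton] at this
    have hn1 : 1 ≤ n := by rw [hn]; exact Fintype.card_pos_iff.mpr ⟨x⟩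
    omega
end

section
/- For a connected graph G of order n ≥ 2, 𝔡*(G) = 2 if and only if G is isomorphic to the complete graph K_n. -/
open SimpleGraph Finset

/-!
In `K_n` a vertex `z ∉ {x, y}` is at distance one from both, so only `x` and `y` distinguish
them. A connected graph that is not complete contains an induced path `x - a - b`, and then
`x`, `a` and `b` all distinguish the adjacent pair `x, a`.
-/

namespace SimpleGraph

variable {V : Type*}

theorem eq_top_of_iso_top {W : Type*} {G : SimpleGraph V} (e : G ≃g (⊤ : SimpleGraph W)) :
    G = ⊤ := by
  ext u v
  rw [← e.map_adj_iff, top_adj, top_adj, e.injective.ne_iff]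

theorem nonempty_iso_top_fin_iff_eq_top [Fintype V] (G : SimpleGraph V) :
    Nonempty (G ≃g (⊤ : SimpleGraph (Fin (Fintype.card V)))) ↔ G = ⊤ :=
  ⟨fun ⟨e⟩ ↦ eq_top_of_iso_top e, fun h ↦ h ▸ ⟨Iso.completeGraph (Fintype.equivFin V)⟩⟩

theorem Connected.exists_adj_adj_not_adj_ne_of_ne_top {G : SimpleGraph V} (hG : G.Connected)
    (h : G ≠ ⊤) : ∃ x a b : V, G.Adj x a ∧ G.Adj a b ∧ ¬G.Adj x b ∧ x ≠ b := by
  obtain ⟨u, v, huv, hnadj⟩ : ∃ u v : V, u ≠ v ∧ ¬G.Adj u v := by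
    by_contra! hall
    exact h (eq_top_iff.mpr fun u v huv ↦ hall u v huv)
  obtain ⟨p, hp⟩ := hG.exists_walk_length_eq_dist u v
  exact p.exists_adj_adj_not_adj_ne hp (hG.one_lt_dist_of_ne_of_not_adj huv hnadj)

end SimpleGraph

open SimpleGraph

section DG

variable {V : Type*} [Fintype V]

theorem left_mem_DG_of_adj {G : SimpleGraph V} {x y : V} (h : G.Adj x y) : x ∈ DG G x y := by
  simp [DG, dist_eq_one_iff_adj.mpr h]

theorem right_mem_DG_of_adj {G : SimpleGraph V} {x y : V} (h : G.Adj x y) : y ∈ DG G x y := by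
  simp [DG, dist_eq_one_iff_adj.mpr h.symm]

theorem three_le_card_DG {G : SimpleGraph V} {x a b : V} (hxa : G.Adj x a) (hab : G.Adj a b)
    (hxb : ¬G.Adj x b) (hne : x ≠ b) : 3 ≤ (DG G x a).card := by
  classical
  have hb : b ∈ DG G x a := by
    simp only [DG, mem_filter, mem_univ, true_and, dist_comm (u := b),
      dist_eq_one_iff_adj.mpr hab]
    exact mt dist_eq_one_iff_adj.mp hxb
  have hsub : {x, a, b} ⊆ DG G x a := by
    simp only [insert_subset_iff, singleton_subset_iff]
    exact ⟨left_mem_DG_of_adj hxa, right_mem_DG_of_adj hxa, hb⟩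
  calc 3 = ({x, a, b} : Finset V).card := by
        rw [card_insert_of_notMem (by simp [hxa.ne, hne]),
          card_pair hab.ne]
    _ ≤ (DG G x a).card := card_le_card hsub

theorem DG_top [DecidableEq V] {x y : V} (h : x ≠ y) : DG ⊤ x y = {x, y} := by
  ext z
  by_cases hzx : z = x
  · subst hzx; simp [DG, dist_top_of_ne h]
  by_cases hzy : z = y
  · subst hzy; simp [DG, dist_top_of_ne (Ne.symm h)]
  simp [DG, dist_top_of_ne hzx, dist_top_of_ne hzy, hzx, hzy]

theorem card_DG_le_frakdStar {G : SimpleGraph V} {x y : V} (h : x ≠ y) :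
    (DG G x y).card ≤ frakdStar G := by
  refine le_csSup ⟨Fintype.card V, ?_⟩ ⟨x, y, h, rfl⟩
  rintro m ⟨u, v, -, rfl⟩
  exact card_le_univ _

theorem frakdStar_top (hV : 1 < Fintype.card V) : frakdStar (⊤ : SimpleGraph V) = 2 := by
  classical
  have hset : {m | ∃ x y : V, x ≠ y ∧ (DG ⊤ x y).card = m} = {2} := by
    obtain ⟨a, b, hab⟩ := Fintype.exists_pair_of_one_lt_card hV
    ext m
    simp only [Set.mem_ofPred_eq, Set.mem_singleton_iff]
    constructor
    · rintro ⟨x, y, hxy, rfl⟩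
      rw [DG_top hxy, card_pair hxy]
    · rintro rfl
      exact ⟨a, b, hab, by rw [DG_top hab, card_pair hab]⟩
  rw [frakdStar, hset, csSup_singleton]

end DG

theorem stmt_17_general {V : Type*} [Fintype V] (G : SimpleGraph V)
    (hG : G.Connected) (hn : 2 ≤ Fintype.card V) :
    frakdStar G = 2 ↔ Nonempty (G ≃g (⊤ : SimpleGraph (Fin (Fintype.card V)))) := by
  rw [nonempty_iso_top_fin_iff_eq_top]
  constructor
  · intro h
    by_contra hne
    obtain ⟨x, a, b, hxa, hab, hxb, hxb'⟩ := hG.exists_adj_adj_not_adj_ne_of_ne_top hne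
    have := (three_le_card_DG hxa hab hxb hxb').trans (card_DG_le_frakdStar hxa.ne)
    omega
  · rintro rfl
    exact frakdStar_top hn

theorem stmt_17 {V : Type*} [Fintype V] [DecidableEq V] (G : SimpleGraph V)
    (hG : G.Connected) (hn : 2 ≤ Fintype.card V) :
    frakdStar G = 2 ↔ Nonempty (G ≃g (⊤ : SimpleGraph (Fin (Fintype.card V)))) :=
  stmt_17_general G hG hn
end
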